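/- arXiv:2203.09426 — 2 statements merged into one kernel-verified Lean document; each statement's English description precedes it below -/
import Mathlib

section
/- Let a₁, a₂, a₃, a₄ ∈ ℂ with a₁ + a₂ + a₃ + a₄ = 2, let μ ∈ ℂ ∖ {0}, and let U ⊆ ℂ ∖ {0, μ} be a connected open set. Let Σ be an antisymmetric complex 4×4 matrix and let Π : U → ℂ⁴ be a map whose four components are holomorphic on U and each satisfy the hypergeometric Picard–Fuchs equation θ⁴y = μ⁻¹·z·(θ + a₁)(θ + a₂)(θ + a₃)(θ + a₄)y, where θ = z·d/dz. Assume that Π(z)ᵀ Σ Π^{(k)}(z) = 0 for all z ∈ U and for k = 0, 1, 2 (ordinary derivatives with respect to z). Then the function z ↦ z³·(1 − z/μ)·Π(z)ᵀ Σ Π'''(z) is constant on U. -/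
open Complex

/-- The logarithmic derivative operator `θ = z·d/dz`. -/
noncomputable def logDerivOp (f : ℂ → ℂ) : ℂ → ℂ := fun z => z * deriv f z

/-- The shifted operator `θ + a`. -/
noncomputable def logDerivOpShift (a : ℂ) (f : ℂ → ℂ) : ℂ → ℂ :=
  fun z => z * deriv f z + a * f z

/-!
Write `W m n = Π⁽ᵐ⁾ᵀ Σ Π⁽ⁿ⁾`. Then `(W m n)' = W (m+1) n + W m (n+1)`, and `W m m = 0` because `Σ` is
antisymmetric. Differentiating `W 0 2 = 0` twice gives `(W 0 3)' = W 0 4 / 2`. Expanding `θ⁴` and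
`(θ+a₁)(θ+a₂)(θ+a₃)(θ+a₄)` as Euler operators `∑ cₖ zᵏ dᵏ/dzᵏ` and pairing the Picard–Fuchs
equation with `Πᵀ Σ`, only the terms with `k = 3, 4` survive:
`z³ (6 W 0 3 + z W 0 4) = μ⁻¹ z⁴ ((6 + ∑ aᵢ) W 0 3 + z W 0 4)`. For `∑ aᵢ = 2` this says exactly
that `2 z Y' = 0` for `Y = z³ (1 - z/μ) W 0 3`, so `Y` is constant on the connected set `U`.
-/

open Finset

theorem Matrix.sum_sum_mul_mul_self_eq_zero {ι R : Type*} [Fintype ι] [CommRing R]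
    [IsAddTorsionFree R] {S : Matrix ι ι R} (hS : S.transpose = -S) (u : ι → R) :
    ∑ i, ∑ j, u i * S i j * u j = 0 := by
  have hS' : ∀ i j, S j i = -S i j := fun i j => by
    simpa using congrFun (congrFun hS i) j
  refine self_eq_neg.mp ?_
  calc ∑ i, ∑ j, u i * S i j * u j = ∑ j, ∑ i, u i * S i j * u j := sum_comm
    _ = -∑ i, ∑ j, u i * S i j * u j := by
      simp only [← sum_neg_distrib]
      refine sum_congr rfl fun i _ => sum_congr rfl fun j _ => ?_
      rw [hS' i j]
      ring

theorem AnalyticOnNhd.hasDerivAt_iteratedDeriv {𝕜 E : Type*} [NontriviallyNormedField 𝕜]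
    [NormedAddCommGroup E] [NormedSpace 𝕜 E] [CompleteSpace E] {f : 𝕜 → E} {U : Set 𝕜}
    (hf : AnalyticOnNhd 𝕜 f U) (k : ℕ) {z : 𝕜} (hz : z ∈ U) :
    HasDerivAt (iteratedDeriv k f) (iteratedDeriv (k + 1) f z) z := by
  have h : AnalyticAt 𝕜 (iteratedDeriv k f) z := by
    rw [iteratedDeriv_eq_iterate]
    exact hf.iterated_deriv k z hz
  rw [iteratedDeriv_succ]
  exact h.differentiableAt.hasDerivAt

theorem HasDerivAt.eq_zero_of_eqOn_zero {𝕜 E : Type*} [NontriviallyNormedField 𝕜]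
    [NormedAddCommGroup E] [NormedSpace 𝕜 E] {f : 𝕜 → E} {f' : E} {U : Set 𝕜} {z : 𝕜}
    (hf : HasDerivAt f f' z) (hU : IsOpen U) (hfU : Set.EqOn f 0 U) (hz : z ∈ U) : f' = 0 :=
  hf.unique <| (hasDerivAt_const z 0).congr_of_eventuallyEq <|
    Filter.eventuallyEq_of_mem (hU.mem_nhds hz) hfU

noncomputable def eulerForm (n : ℕ) (c : ℕ → ℂ) (f : ℂ → ℂ) (z : ℂ) : ℂ :=
  ∑ k ∈ range n, c k * z ^ k * iteratedDeriv k f z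

/-- Since `(θ + a) (z ^ k f⁽ᵏ⁾) = (k + a) z ^ k f⁽ᵏ⁾ + z ^ (k + 1) f⁽ᵏ⁺¹⁾`, this is the coefficient
sequence of `(θ + a)` applied to the Euler form with coefficients `c`. -/
def eulerShift (a : ℂ) (c : ℕ → ℂ) : ℕ → ℂ
  | 0 => a * c 0
  | k + 1 => (k + 1 + a) * c (k + 1) + c k

theorem logDerivOpShift_zero : logDerivOpShift 0 = logDerivOp := by
  ext f z
  simp [logDerivOpShift, logDerivOp]

theorem logDerivOpShift_eulerForm {f : ℂ → ℂ} {U : Set ℂ} (hf : AnalyticOnNhd ℂ f U)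
    (a : ℂ) {n : ℕ} {c : ℕ → ℂ} (hc : c n = 0) {z : ℂ} (hz : z ∈ U) :
    logDerivOpShift a (eulerForm n c f) z = eulerForm (n + 1) (eulerShift a c) f z := by
  have hderiv : HasDerivAt (eulerForm n c f) (∑ k ∈ range n, (c k * (k * z ^ (k - 1)) *
      iteratedDeriv k f z + c k * z ^ k * iteratedDeriv (k + 1) f z)) z :=
    HasDerivAt.fun_sum fun k _ =>
      ((hasDerivAt_pow k z).const_mul (c k)).mul (hf.hasDerivAt_iteratedDeriv k hz)
  have hlow : ∑ k ∈ range n, (k + a) * c k * z ^ k * iteratedDeriv k f z =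
      ∑ k ∈ range n, (k + 1 + a) * c (k + 1) * z ^ (k + 1) * iteratedDeriv (k + 1) f z
        + a * c 0 * f z := by
    have := sum_range_succ' (fun k => (k + a) * c k * z ^ k * iteratedDeriv k f z) n
    rw [sum_range_succ, hc] at this
    simpa using this
  have hterm : ∀ k : ℕ, z * (c k * (k * z ^ (k - 1)) * iteratedDeriv k f z
      + c k * z ^ k * iteratedDeriv (k + 1) f z) + a * (c k * z ^ k * iteratedDeriv k f z)
      = (k + a) * c k * z ^ k * iteratedDeriv k f z
        + c k * z ^ (k + 1) * iteratedDeriv (k + 1) f z := by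
    rintro (_ | k)
    · simp only [CharP.cast_eq_zero, zero_mul, mul_zero, pow_zero, zero_add]
      ring
    · simp only [Nat.add_sub_cancel, pow_succ]
      ring
  simp only [logDerivOpShift, hderiv.deriv, eulerForm, mul_sum, ← sum_add_distrib, hterm]
  rw [sum_add_distrib, hlow, sum_range_succ']
  simp only [eulerShift, add_mul, sum_add_distrib, one_mul, pow_zero, mul_one, iteratedDeriv_zero]
  ring

theorem eqOn_logDerivOpShift_eulerForm {f g : ℂ → ℂ} {U : Set ℂ} (hU : IsOpen U)
    (hf : AnalyticOnNhd ℂ f U) (a : ℂ) {n : ℕ} {c : ℕ → ℂ} (hc : c n = 0)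
    (hg : Set.EqOn g (eulerForm n c f) U) :
    Set.EqOn (logDerivOpShift a g) (eulerForm (n + 1) (eulerShift a c) f) U := by
  intro z hz
  rw [← logDerivOpShift_eulerForm hf a hc hz]
  have hev : g =ᶠ[nhds z] eulerForm n c f := Filter.eventuallyEq_of_mem (hU.mem_nhds hz) hg
  simp only [logDerivOpShift, hev.deriv_eq, hg hz]

theorem eqOn_logDerivOpShift_four {f : ℂ → ℂ} {U : Set ℂ} (hU : IsOpen U)
    (hf : AnalyticOnNhd ℂ f U) (a₁ a₂ a₃ a₄ : ℂ) :
    Set.EqOn (logDerivOpShift a₁ (logDerivOpShift a₂ (logDerivOpShift a₃ (logDerivOpShift a₄ f))))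
      (eulerForm 5 (eulerShift a₁ (eulerShift a₂ (eulerShift a₃ (eulerShift a₄
        (Pi.single 0 1))))) f) U := by
  have h₀ : Set.EqOn f (eulerForm 1 (Pi.single 0 1) f) U := fun z _ => by simp [eulerForm]
  refine eqOn_logDerivOpShift_eulerForm hU hf _ (by simp [eulerShift]) <|
    eqOn_logDerivOpShift_eulerForm hU hf _ (by simp [eulerShift]) <|
    eqOn_logDerivOpShift_eulerForm hU hf _ (by simp [eulerShift]) <|
    eqOn_logDerivOpShift_eulerForm hU hf _ (by simp) h₀

def SolvesHypergeometricPF (a₁ a₂ a₃ a₄ μ : ℂ) (U : Set ℂ) (f : ℂ → ℂ) : Prop :=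
  ∀ z ∈ U, logDerivOp (logDerivOp (logDerivOp (logDerivOp f))) z
    = μ⁻¹ * z * logDerivOpShift a₁ (logDerivOpShift a₂ (logDerivOpShift a₃
        (logDerivOpShift a₄ f))) z

section Pairing

variable {ι : Type*} [Fintype ι] (S : Matrix ι ι ℂ) (P : ℂ → ι → ℂ)

noncomputable def derivPairing (m n : ℕ) (z : ℂ) : ℂ :=
  ∑ i, ∑ j, iteratedDeriv m (fun w => P w i) z * S i j * iteratedDeriv n (fun w => P w j) z

theorem derivPairing_zero_left (n : ℕ) (z : ℂ) :
    derivPairing S P 0 n z = ∑ i, ∑ j, P z i * S i j * iteratedDeriv n (fun w => P w j) z := by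
  simp [derivPairing]

variable {S P}

theorem derivPairing_self (hS : S.transpose = -S) (m : ℕ) (z : ℂ) :
    derivPairing S P m m z = 0 :=
  Matrix.sum_sum_mul_mul_self_eq_zero hS _

theorem hasDerivAt_derivPairing {U : Set ℂ} (hP : ∀ i, AnalyticOnNhd ℂ (fun w => P w i) U)
    (m n : ℕ) {z : ℂ} (hz : z ∈ U) :
    HasDerivAt (derivPairing S P m n)
      (derivPairing S P (m + 1) n z + derivPairing S P m (n + 1) z) z := by
  have h : HasDerivAt (derivPairing S P m n) (∑ i, ∑ j,
      (iteratedDeriv (m + 1) (fun w => P w i) z * S i j * iteratedDeriv n (fun w => P w j) z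
        + iteratedDeriv m (fun w => P w i) z * S i j * iteratedDeriv (n + 1) (fun w => P w j) z))
      z :=
    HasDerivAt.fun_sum fun i _ => HasDerivAt.fun_sum fun j _ =>
      (((hP i).hasDerivAt_iteratedDeriv m hz).mul_const (S i j)).mul
        ((hP j).hasDerivAt_iteratedDeriv n hz)
  simpa only [derivPairing, sum_add_distrib] using h

theorem sum_mul_eulerForm (n : ℕ) (c : ℕ → ℂ) (z : ℂ) :
    ∑ i, ∑ j, P z i * S i j * eulerForm n c (fun w => P w j) z
      = ∑ k ∈ range n, c k * z ^ k * derivPairing S P 0 k z := by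
  simp only [derivPairing_zero_left, eulerForm, mul_sum]
  refine (sum_congr rfl fun i _ => sum_comm).trans <| sum_comm.trans <|
    sum_congr rfl fun k _ => sum_congr rfl fun i _ => sum_congr rfl fun j _ => by ring

variable {U : Set ℂ}

/-- Differentiating `Πᵀ Σ Π'' = 0` and then `Π'ᵀ Σ Π'' = -Πᵀ Σ Π'''` gives
`2 Π'ᵀ Σ Π''' = -Πᵀ Σ Π⁗`, since `Π''ᵀ Σ Π'' = 0`. -/
theorem hasDerivAt_derivPairing_zero_three (hU : IsOpen U)
    (hP : ∀ i, AnalyticOnNhd ℂ (fun w => P w i) U) (hS : S.transpose = -S)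
    (hvan : ∀ k ≤ 2, ∀ z ∈ U, derivPairing S P 0 k z = 0) {z : ℂ} (hz : z ∈ U) :
    HasDerivAt (derivPairing S P 0 3) (derivPairing S P 0 4 z / 2) z := by
  have h₁₂ : Set.EqOn (fun w => derivPairing S P 1 2 w + derivPairing S P 0 3 w) 0 U :=
    fun w hw => (hasDerivAt_derivPairing hP 0 2 hw).eq_zero_of_eqOn_zero hU (hvan 2 le_rfl) hw
  have h₁₃ := ((hasDerivAt_derivPairing hP 1 2 hz).add
    (hasDerivAt_derivPairing hP 0 3 hz)).eq_zero_of_eqOn_zero hU h₁₂ hz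
  rw [derivPairing_self hS] at h₁₃
  refine (hasDerivAt_derivPairing hP 0 3 hz).congr_deriv ?_
  linear_combination h₁₃ / 2

theorem derivPairing_picardFuchs (hU : IsOpen U) (hP : ∀ i, AnalyticOnNhd ℂ (fun w => P w i) U)
    {a₁ a₂ a₃ a₄ μ : ℂ}
    (hODE : ∀ i, SolvesHypergeometricPF a₁ a₂ a₃ a₄ μ U (fun w => P w i))
    (hvan : ∀ k ≤ 2, ∀ z ∈ U, derivPairing S P 0 k z = 0) {z : ℂ} (hz : z ∈ U) :
    z ^ 3 * (6 * derivPairing S P 0 3 z + z * derivPairing S P 0 4 z)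
      = μ⁻¹ * z ^ 4 * ((6 + a₁ + a₂ + a₃ + a₄) * derivPairing S P 0 3 z
          + z * derivPairing S P 0 4 z) := by
  have h := sum_congr rfl fun i (_ : i ∈ univ) => sum_congr rfl fun j (_ : j ∈ univ) =>
    congrArg (P z i * S i j * ·) (hODE j z hz)
  simp only [← logDerivOpShift_zero, eqOn_logDerivOpShift_four hU (hP _) _ _ _ _ hz,
    mul_left_comm _ (μ⁻¹ * z), ← mul_sum, sum_mul_eulerForm] at h
  simp only [eulerShift, Pi.single_eq_same, mul_one, mul_zero, add_zero, ne_eq,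
    Nat.add_eq_zero_iff, one_ne_zero, and_false, not_false_eq_true, Pi.single_eq_of_ne, zero_add,
    sum_range_succ, range_one, sum_singleton, pow_zero, CharP.cast_eq_zero, pow_one, one_mul,
    Nat.cast_one, Nat.cast_ofNat, OfNat.ofNat_ne_zero, hvan 0 (by norm_num) z hz,
    hvan 1 (by norm_num) z hz, hvan 2 le_rfl z hz] at h
  linear_combination h

theorem hasDerivAt_yukawa (hU : IsOpen U) (hU0 : (0 : ℂ) ∉ U)
    (hP : ∀ i, AnalyticOnNhd ℂ (fun w => P w i) U) (hS : S.transpose = -S)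
    {a₁ a₂ a₃ a₄ μ : ℂ} (hsum : a₁ + a₂ + a₃ + a₄ = 2)
    (hODE : ∀ i, SolvesHypergeometricPF a₁ a₂ a₃ a₄ μ U (fun w => P w i))
    (hvan : ∀ k ≤ 2, ∀ z ∈ U, derivPairing S P 0 k z = 0) {z : ℂ} (hz : z ∈ U) :
    HasDerivAt (fun w => w ^ 3 * (1 - w / μ) * derivPairing S P 0 3 w) 0 z := by
  have hz0 : z ≠ 0 := ne_of_mem_of_not_mem hz hU0
  have hPF := derivPairing_picardFuchs hU hP hODE hvan hz
  refine (((hasDerivAt_pow 3 z).mul (((hasDerivAt_id z).div_const μ).const_sub 1)).mul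
    (hasDerivAt_derivPairing_zero_three hU hP hS hvan hz)).congr_deriv ?_
  refine mul_left_cancel₀ (mul_ne_zero two_ne_zero hz0) ?_
  simp only [id_eq, Pi.mul_apply]
  linear_combination hPF + μ⁻¹ * z ^ 4 * derivPairing S P 0 3 z * hsum

end Pairing

theorem yukawa_coupling_constant_general
    (a₁ a₂ a₃ a₄ μ : ℂ) (hsum : a₁ + a₂ + a₃ + a₄ = 2)
    (U : Set ℂ) (hUopen : IsOpen U) (hUconn : IsConnected U)
    (hU0 : (0 : ℂ) ∉ U)
    (S : Matrix (Fin 4) (Fin 4) ℂ) (hS : S.transpose = -S)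
    (P : ℂ → Fin 4 → ℂ)
    (hP : ∀ i, DifferentiableOn ℂ (fun z => P z i) U)
    (hODE : ∀ i, ∀ z ∈ U,
      logDerivOp (logDerivOp (logDerivOp (logDerivOp (fun w => P w i)))) z
        = μ⁻¹ * z *
            logDerivOpShift a₁ (logDerivOpShift a₂ (logDerivOpShift a₃
              (logDerivOpShift a₄ (fun w => P w i)))) z)
    (hPair : ∀ k : ℕ, k ≤ 2 → ∀ z ∈ U,
      ∑ i, ∑ j, P z i * S i j * iteratedDeriv k (fun w => P w j) z = 0) :
    ∃ c : ℂ, ∀ z ∈ U,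
      z ^ 3 * (1 - z / μ) *
        ∑ i, ∑ j, P z i * S i j * iteratedDeriv 3 (fun w => P w j) z = c := by
  have hPa : ∀ i, AnalyticOnNhd ℂ (fun w => P w i) U := fun i => (hP i).analyticOnNhd hUopen
  have hvan : ∀ k ≤ 2, ∀ z ∈ U, derivPairing S P 0 k z = 0 := fun k hk z hz =>
    (derivPairing_zero_left S P k z).trans (hPair k hk z hz)
  have hY := fun z (hz : z ∈ U) => hasDerivAt_yukawa hUopen hU0 hPa hS hsum hODE hvan hz
  obtain ⟨c, hc⟩ := hUopen.exists_is_const_of_deriv_eq_zero hUconn.isPreconnected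
    (fun z hz => (hY z hz).differentiableAt.differentiableWithinAt) (fun z hz => (hY z hz).deriv)
  exact ⟨c, fun z hz => derivPairing_zero_left S P 3 z ▸ hc z hz⟩

/-- For the hypergeometric Picard–Fuchs operator
`θ⁴ − μ⁻¹ z (θ+a₁)(θ+a₂)(θ+a₃)(θ+a₄)` with `a₁+a₂+a₃+a₄ = 2`, and `Π : U → ℂ⁴` a vector of
holomorphic solutions on a connected open `U ⊆ ℂ ∖ {0, μ}` satisfying
`Π(z)ᵀ Σ Π^{(k)}(z) = 0` for `k = 0, 1, 2` (with `Σ` antisymmetric), the function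
`z ↦ z³·(1 − z/μ)·Π(z)ᵀ Σ Π'''(z)` is constant on `U`. -/
theorem yukawa_coupling_constant
    (a₁ a₂ a₃ a₄ μ : ℂ) (hsum : a₁ + a₂ + a₃ + a₄ = 2) (hμ : μ ≠ 0)
    (U : Set ℂ) (hUopen : IsOpen U) (hUconn : IsConnected U)
    (hU0 : (0 : ℂ) ∉ U) (hUμ : μ ∉ U)
    (S : Matrix (Fin 4) (Fin 4) ℂ) (hS : S.transpose = -S)
    (P : ℂ → Fin 4 → ℂ)
    (hP : ∀ i, DifferentiableOn ℂ (fun z => P z i) U)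
    (hODE : ∀ i, ∀ z ∈ U,
      logDerivOp (logDerivOp (logDerivOp (logDerivOp (fun w => P w i)))) z
        = μ⁻¹ * z *
            logDerivOpShift a₁ (logDerivOpShift a₂ (logDerivOpShift a₃
              (logDerivOpShift a₄ (fun w => P w i)))) z)
    (hPair : ∀ k : ℕ, k ≤ 2 → ∀ z ∈ U,
      ∑ i, ∑ j, P z i * S i j * iteratedDeriv k (fun w => P w j) z = 0) :
    ∃ c : ℂ, ∀ z ∈ U,
      z ^ 3 * (1 - z / μ) *
        ∑ i, ∑ j, P z i * S i j * iteratedDeriv 3 (fun w => P w j) z = c :=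
  yukawa_coupling_constant_general a₁ a₂ a₃ a₄ μ hsum U hUopen hUconn hU0 S hS P hP hODE hPair
end

section
/- Let k ≥ 2 be an integer, let f : ℍ → ℂ be holomorphic, let γ ∈ SL(2, ℝ) satisfy f|_k γ = f, and fix τ₀ ∈ ℍ. Then for every τ ∈ ℍ, (f̃_{τ₀} |_{2−k} γ)(τ) − f̃_{τ₀}(τ) = ((2πi)^{k−1}/(k−2)!) · ∫_{γ^{−1}τ₀}^{τ₀} (τ − z)^{k−2} f(z) dz (the integral along any path in ℍ); in particular, the function τ ↦ (f̃_{τ₀} |_{2−k} γ)(τ) − f̃_{τ₀}(τ) is a polynomial in τ of degree at most k−2. -/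
open Complex

/-- The weight-`w` slash action of the real matrix `(a b; c d)` on functions `ℂ → ℂ`. -/
noncomputable def slash (w : ℤ) (a b c d : ℝ) (F : ℂ → ℂ) : ℂ → ℂ :=
  fun τ => ((c : ℂ) * τ + (d : ℂ)) ^ (-w) * F (((a : ℂ) * τ + (b : ℂ)) / ((c : ℂ) * τ + (d : ℂ)))

/-- The integral of `g` along the straight segment from `z₀` to `z₁`
(the path integral `∫_{z₀}^{z₁} g(z) dz`; for holomorphic integrands on the simply connected
upper half-plane this agrees with the integral along any path in the upper half-plane). -/
noncomputable def segInt (g : ℂ → ℂ) (z₀ z₁ : ℂ) : ℂ :=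
  ∫ t in (0:ℝ)..1, g (z₀ + (t : ℂ) * (z₁ - z₀)) * (z₁ - z₀)

/-- The Eichler integral `f̃_{τ₀}(τ) = ((2πi)^{k−1}/(k−2)!) ∫_{τ₀}^{τ} (τ−z)^{k−2} f(z) dz`. -/
noncomputable def eichler (k : ℕ) (f : ℂ → ℂ) (τ₀ τ : ℂ) : ℂ :=
  (2 * (Real.pi : ℂ) * Complex.I) ^ (k - 1) / (Nat.factorial (k - 2) : ℂ) *
    segInt (fun z => (τ - z) ^ (k - 2) * f z) τ₀ τ


/-!
Fix `τ` and let `J` be the Möbius map of `γ`. If `P` is a primitive of `z ↦ (Jτ - z)^(k-2) f z`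
on `ℍ`, then `H w = (cτ + d)^(k-2) P (J w)` is a primitive of `w ↦ (τ - w)^(k-2) f w`: in the chain
rule, `Jτ - Jw = (τ - w) / ((cτ + d)(cw + d))`, `J' w = (cw + d)⁻²` and `f (J w) = (cw + d)^k f w`
make all automorphy factors cancel. Integrating along segments, `(f̃|γ)(τ) = C (H τ - H (γ⁻¹τ₀))`
and `f̃(τ) = C (H τ - H τ₀)`, so the difference is `C (H τ₀ - H (γ⁻¹τ₀))`, the integral from
`γ⁻¹τ₀` to `τ₀`; expanding `(τ - z)^(k-2)` binomially under the integral makes it a polynomial.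

Primitives on `ℍ` exist because any two points of `ℍ` lie in a disc inside `ℍ`, where Morera's
theorem applies.
-/

open Set Metric
open UpperHalfPlane (upperHalfPlaneSet)
open scoped Convex

lemma mapsTo_segment_param (z₀ z₁ : ℂ) :
    MapsTo (fun t : ℝ => z₀ + (t : ℂ) * (z₁ - z₀)) (Icc 0 1) [z₀ -[ℝ] z₁] := by
  intro t ht
  rw [segment_eq_image']
  exact ⟨t, ht, by simp [Complex.real_smul]⟩

lemma intervalIntegrable_segInt_integrand {g : ℂ → ℂ} {z₀ z₁ : ℂ}
    (hg : ContinuousOn g [z₀ -[ℝ] z₁]) :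
    IntervalIntegrable (fun t : ℝ => g (z₀ + (t : ℂ) * (z₁ - z₀)) * (z₁ - z₀))
      MeasureTheory.volume 0 1 := by
  refine ContinuousOn.intervalIntegrable ?_
  rw [uIcc_of_le zero_le_one]
  exact (hg.comp (by fun_prop) (mapsTo_segment_param z₀ z₁)).mul continuousOn_const

theorem segInt_eq_sub_of_hasDerivAt {g P : ℂ → ℂ} {z₀ z₁ : ℂ}
    (hg : ContinuousOn g [z₀ -[ℝ] z₁]) (hP : ∀ z ∈ [z₀ -[ℝ] z₁], HasDerivAt P (g z) z) :
    segInt g z₀ z₁ = P z₁ - P z₀ := by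
  have hderiv : ∀ t ∈ uIcc (0 : ℝ) 1, HasDerivAt (fun s : ℝ => P (z₀ + (s : ℂ) * (z₁ - z₀)))
      (g (z₀ + (t : ℂ) * (z₁ - z₀)) * (z₁ - z₀)) t := by
    intro t ht
    rw [uIcc_of_le zero_le_one] at ht
    have hline : HasDerivAt (fun s : ℂ => z₀ + s * (z₁ - z₀)) (z₁ - z₀) t := by
      simpa using ((hasDerivAt_id (t : ℂ)).mul_const (z₁ - z₀)).const_add z₀
    exact ((hP _ (mapsTo_segment_param z₀ z₁ ht)).comp (t : ℂ) hline).comp_ofReal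
  simpa [segInt] using intervalIntegral.integral_eq_sub_of_hasDerivAt hderiv
    (intervalIntegrable_segInt_integrand hg)

theorem Convex.segInt_eq_sub_of_hasDerivAt {s : Set ℂ} (hs : Convex ℝ s) {g P : ℂ → ℂ}
    (hg : ContinuousOn g s) (hP : ∀ z ∈ s, HasDerivAt P (g z) z) {z₀ z₁ : ℂ} (h₀ : z₀ ∈ s)
    (h₁ : z₁ ∈ s) : segInt g z₀ z₁ = P z₁ - P z₀ :=
  _root_.segInt_eq_sub_of_hasDerivAt (hg.mono (hs.segment_subset h₀ h₁))
    fun z hz => hP z (hs.segment_subset h₀ h₁ hz)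

lemma mem_ball_ofReal_mul_I_iff {R : ℝ} (hR : 0 < R) {w : ℂ} :
    w ∈ ball (R * I) R ↔ normSq w < 2 * R * w.im := by
  rw [mem_ball, dist_eq, ← sq_lt_sq₀ (norm_nonneg _) hR.le, Complex.sq_norm]
  simp only [normSq_apply, sub_re, sub_im, mul_re,
    mul_im, ofReal_re, ofReal_im, I_re, I_im]
  constructor <;> intro h <;> nlinarith

lemma ball_ofReal_mul_I_subset_upperHalfPlaneSet {R : ℝ} (hR : 0 < R) :
    ball (R * I) R ⊆ upperHalfPlaneSet := fun w hw => by
  have hpos : 0 < 2 * R * w.im := (normSq_nonneg w).trans_lt ((mem_ball_ofReal_mul_I_iff hR).1 hw)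
  exact pos_of_mul_pos_right hpos (by positivity)

lemma exists_ball_subset_upperHalfPlaneSet {z₀ z₁ : ℂ} (h₀ : 0 < z₀.im) (h₁ : 0 < z₁.im) :
    ∃ c r, z₀ ∈ ball c r ∧ z₁ ∈ ball c r ∧ ball c r ⊆ upperHalfPlaneSet := by
  have q₀ := div_nonneg (normSq_nonneg z₀) h₀.le
  have q₁ := div_nonneg (normSq_nonneg z₁) h₁.le
  set R := normSq z₀ / z₀.im + normSq z₁ / z₁.im + 1
  have hR : 0 < R := by positivity
  have hR₀ : normSq z₀ < 2 * R * z₀.im := by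
    rw [← div_lt_iff₀ h₀]; linarith
  have hR₁ : normSq z₁ < 2 * R * z₁.im := by
    rw [← div_lt_iff₀ h₁]; linarith
  exact ⟨_, R, (mem_ball_ofReal_mul_I_iff hR).2 hR₀, (mem_ball_ofReal_mul_I_iff hR).2 hR₁,
    ball_ofReal_mul_I_subset_upperHalfPlaneSet hR⟩

theorem isExactOn_upperHalfPlaneSet {g : ℂ → ℂ} (hg : DifferentiableOn ℂ g upperHalfPlaneSet) :
    Complex.IsExactOn g upperHalfPlaneSet := by
  refine ⟨segInt g I, fun z hz => ?_⟩
  obtain ⟨c, r, hI, hz, hball⟩ :=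
    exists_ball_subset_upperHalfPlaneSet (z₀ := I) (by simp) hz
  obtain ⟨P, hP⟩ := (hg.mono hball).isExactOn_ball
  have hsegInt : ∀ w ∈ ball c r, segInt g I w = P w - P I := fun w hw =>
    (convex_ball c r).segInt_eq_sub_of_hasDerivAt (hg.continuousOn.mono hball) hP hI hw
  exact ((hP z hz).sub_const _).congr_of_eventuallyEq
    (Filter.eventually_of_mem (isOpen_ball.mem_nhds hz) hsegInt)

noncomputable def moebius (a b c d : ℝ) (w : ℂ) : ℂ := (a * w + b) / (c * w + d)

section Moebius

variable {a b c d : ℝ} {w : ℂ}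

lemma im_moebius :
    (moebius a b c d w).im = (a * d - b * c) * w.im / normSq (c * w + d) := by
  simp only [moebius, div_im, add_im, add_re, mul_im,
    mul_re, ofReal_re, ofReal_im]
  ring

lemma moebius_denom_ne_zero (hdet : a * d - b * c = 1) (hw : 0 < w.im) : (c : ℂ) * w + d ≠ 0 := by
  intro h
  have hc : c = 0 := by
    simpa [hw.ne'] using congrArg Complex.im h
  have hd : d = 0 := by
    simpa [hc] using congrArg Complex.re h
  simp [hc, hd] at hdet

lemma moebius_mem_upperHalfPlaneSet (hdet : a * d - b * c = 1) (hw : 0 < w.im) :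
    0 < (moebius a b c d w).im := by
  rw [im_moebius, hdet, one_mul]
  exact div_pos hw (normSq_pos.2 (moebius_denom_ne_zero hdet hw))

lemma hasDerivAt_moebius (hw : (c : ℂ) * w + d ≠ 0) :
    HasDerivAt (moebius a b c d) ((a * d - b * c) / ((c : ℂ) * w + d) ^ 2) w := by
  have hnum : HasDerivAt (fun w : ℂ => a * w + b) (a : ℂ) w := by
    simpa using ((hasDerivAt_id w).const_mul (a : ℂ)).add_const (b : ℂ)
  have hden : HasDerivAt (fun w : ℂ => c * w + d) (c : ℂ) w := by
    simpa using ((hasDerivAt_id w).const_mul (c : ℂ)).add_const (d : ℂ)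
  exact (hnum.div hden hw).congr_deriv (by ring)

lemma moebius_sub_moebius {τ : ℂ} (hτ : (c : ℂ) * τ + d ≠ 0) (hw : (c : ℂ) * w + d ≠ 0) :
    moebius a b c d τ - moebius a b c d w
      = (a * d - b * c) * (τ - w) / (((c : ℂ) * τ + d) * ((c : ℂ) * w + d)) := by
  rw [moebius, moebius, div_sub_div _ _ hτ hw]
  ring

lemma moebius_moebius_inv (hdet : a * d - b * c = 1) (hw : -(c : ℂ) * w + a ≠ 0) :
    moebius a b c d (moebius d (-b) (-c) a w) = w := by
  have hdetC : (a : ℂ) * d - b * c = 1 := by exact_mod_cast hdet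
  have hden : (c : ℂ) * ((d * w + -b) / (-c * w + a)) + d = 1 / (-c * w + a) := by
    rw [eq_div_iff hw, add_mul, mul_assoc, div_mul_cancel₀ _ hw]
    linear_combination hdetC
  have hnum : (a : ℂ) * ((d * w + -b) / (-c * w + a)) + b = w / (-c * w + a) := by
    rw [eq_div_iff hw, add_mul, mul_assoc, div_mul_cancel₀ _ hw]
    linear_combination w * hdetC
  simp only [moebius, ofReal_neg]
  rw [hden, hnum, div_div_div_cancel_right₀ hw, div_one]

end Moebius

lemma slash_apply (w : ℤ) (a b c d : ℝ) (F : ℂ → ℂ) (τ : ℂ) :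
    slash w a b c d F τ = ((c : ℂ) * τ + d) ^ (-w) * F (moebius a b c d τ) := rfl

lemma apply_moebius_eq_of_slash_eq {k : ℕ} {a b c d : ℝ} {f : ℂ → ℂ} {w : ℂ}
    (hw : (c : ℂ) * w + d ≠ 0) (h : slash k a b c d f w = f w) :
    f (moebius a b c d w) = ((c : ℂ) * w + d) ^ k * f w := by
  rwa [slash_apply, zpow_neg, zpow_natCast, inv_mul_eq_iff_eq_mul₀ (pow_ne_zero _ hw)] at h

theorem hasDerivAt_denom_pow_mul_comp_moebius {n : ℕ} {a b c d : ℝ} {f : ℂ → ℂ}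
    (hdet : a * d - b * c = 1)
    (hinv : ∀ w : ℂ, 0 < w.im → slash ((n + 2 : ℕ) : ℤ) a b c d f w = f w)
    {τ : ℂ} (hτ : 0 < τ.im) {P : ℂ → ℂ}
    (hP : ∀ z : ℂ, 0 < z.im → HasDerivAt P ((moebius a b c d τ - z) ^ n * f z) z)
    {w : ℂ} (hw : 0 < w.im) :
    HasDerivAt (fun w => ((c : ℂ) * τ + d) ^ n * P (moebius a b c d w)) ((τ - w) ^ n * f w) w := by
  have hτ' := moebius_denom_ne_zero hdet hτ
  have hw' := moebius_denom_ne_zero hdet hw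
  have hdetC : (a : ℂ) * d - b * c = 1 := by exact_mod_cast hdet
  refine (((hP _ (moebius_mem_upperHalfPlaneSet hdet hw)).comp w
    (hasDerivAt_moebius hw')).const_mul _).congr_deriv ?_
  rw [moebius_sub_moebius hτ' hw', apply_moebius_eq_of_slash_eq hw' (hinv w hw), hdetC,
    one_mul, div_pow, mul_pow, pow_add]
  field_simp

theorem slash_eichler_sub_eichler {k : ℕ} (hk : 2 ≤ k) {f : ℂ → ℂ}
    (hf : DifferentiableOn ℂ f upperHalfPlaneSet) {a b c d : ℝ} (hdet : a * d - b * c = 1)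
    (hinv : ∀ τ : ℂ, 0 < τ.im → slash (k : ℤ) a b c d f τ = f τ) {τ₀ : ℂ} (hτ₀ : 0 < τ₀.im)
    {τ : ℂ} (hτ : 0 < τ.im) :
    slash (2 - (k : ℤ)) a b c d (eichler k f τ₀) τ - eichler k f τ₀ τ
      = (2 * (Real.pi : ℂ) * I) ^ (k - 1) / (Nat.factorial (k - 2) : ℂ) *
          segInt (fun z => (τ - z) ^ (k - 2) * f z) (moebius d (-b) (-c) a τ₀) τ₀ := by
  obtain ⟨n, rfl⟩ := Nat.exists_eq_add_of_le' hk
  simp only [Nat.add_sub_cancel] at hinv ⊢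
  set C := (2 * (Real.pi : ℂ) * I) ^ (n + 1) / (Nat.factorial n : ℂ)
  set q := moebius d (-b) (-c) a τ₀
  have heichler : ∀ σ, eichler (n + 2) f τ₀ σ = C * segInt (fun z => (σ - z) ^ n * f z) τ₀ σ :=
    fun σ => rfl
  show _ = C * _
  have hg : ∀ σ : ℂ, DifferentiableOn ℂ (fun z => (σ - z) ^ n * f z) upperHalfPlaneSet :=
    fun σ => (by fun_prop : Differentiable ℂ fun z : ℂ => (σ - z) ^ n).differentiableOn.mul hf
  obtain ⟨P, hP⟩ := isExactOn_upperHalfPlaneSet (hg (moebius a b c d τ))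
  set H := fun w => ((c : ℂ) * τ + d) ^ n * P (moebius a b c d w)
  have hH : ∀ w ∈ upperHalfPlaneSet, HasDerivAt H ((τ - w) ^ n * f w) w := fun w hw =>
    hasDerivAt_denom_pow_mul_comp_moebius hdet hinv hτ hP hw
  have hdet' : d * a - -b * -c = 1 := by linear_combination hdet
  have hq : 0 < q.im := moebius_mem_upperHalfPlaneSet hdet' hτ₀
  have hPq : P τ₀ = P (moebius a b c d q) := by
    rw [moebius_moebius_inv hdet (by simpa using moebius_denom_ne_zero hdet' hτ₀)]
  have hslash : slash (2 - ((n + 2 : ℕ) : ℤ)) a b c d (eichler (n + 2) f τ₀) τ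
      = C * (H τ - H q) := by
    rw [slash_apply, heichler, (convex_halfSpace_im_gt 0).segInt_eq_sub_of_hasDerivAt
      (hg _).continuousOn hP hτ₀ (moebius_mem_upperHalfPlaneSet hdet hτ), hPq,
      show -(2 - ((n + 2 : ℕ) : ℤ)) = n by push_cast; ring, zpow_natCast]
    ring
  rw [hslash, heichler, (convex_halfSpace_im_gt 0).segInt_eq_sub_of_hasDerivAt
      (hg τ).continuousOn hH hτ₀ hτ, (convex_halfSpace_im_gt 0).segInt_eq_sub_of_hasDerivAt
      (hg τ).continuousOn hH hq hτ₀]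
  ring

open Polynomial in
theorem exists_polynomial_segInt_sub_pow_mul (n : ℕ) {h : ℂ → ℂ} {z₀ z₁ : ℂ}
    (hh : ContinuousOn h [z₀ -[ℝ] z₁]) :
    ∃ p : ℂ[X], p.natDegree ≤ n ∧
      ∀ τ : ℂ, segInt (fun z => (τ - z) ^ n * h z) z₀ z₁ = p.eval τ := by
  let coeff (j : ℕ) (z : ℂ) : ℂ := (-z) ^ (n - j) * n.choose j * h z
  refine ⟨∑ j ∈ Finset.range (n + 1), C (segInt (coeff j) z₀ z₁) * X ^ j,
    natDegree_sum_le_of_forall_le _ _ fun j hj =>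
      (natDegree_C_mul_X_pow_le _ _).trans (Nat.lt_succ_iff.1 (Finset.mem_range.1 hj)), ?_⟩
  intro τ
  have hcoeff : ∀ j, ContinuousOn (coeff j) [z₀ -[ℝ] z₁] := fun j =>
    ((by fun_prop : Continuous fun z : ℂ => (-z) ^ (n - j) * n.choose j).continuousOn).mul hh
  simp only [segInt, eval_finsetSum, eval_mul, eval_C, eval_pow, eval_X,
    ← intervalIntegral.integral_mul_const]
  rw [← intervalIntegral.integral_finsetSum fun j _ =>
    (intervalIntegrable_segInt_integrand (hcoeff j)).mul_const _]
  refine intervalIntegral.integral_congr fun t _ => ?_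
  simp only [coeff, sub_eq_add_neg τ, add_pow, Finset.sum_mul]
  exact Finset.sum_congr rfl fun j _ => by ring

/-- If `f` is holomorphic on the upper half-plane, invariant of weight `k` under
`γ = (a b; c d) ∈ SL(2, ℝ)`, and `τ₀` is in the upper half-plane, then for all `τ` in the upper
half-plane `(f̃_{τ₀}|_{2−k}γ)(τ) − f̃_{τ₀}(τ) = ((2πi)^{k−1}/(k−2)!)·∫_{γ⁻¹τ₀}^{τ₀}(τ−z)^{k−2}f(z)dz`;
in particular this difference is a polynomial in `τ` of degree at most `k−2`. -/
theorem period_polynomial_formula (k : ℕ) (hk : 2 ≤ k)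
    (f : ℂ → ℂ) (hf : DifferentiableOn ℂ f {τ : ℂ | 0 < τ.im})
    (a b c d : ℝ) (hdet : a * d - b * c = 1)
    (hinv : ∀ τ : ℂ, 0 < τ.im → slash (k : ℤ) a b c d f τ = f τ)
    (τ₀ : ℂ) (hτ₀ : 0 < τ₀.im) :
    (∀ τ : ℂ, 0 < τ.im →
      slash (2 - (k : ℤ)) a b c d (eichler k f τ₀) τ - eichler k f τ₀ τ
        = (2 * (Real.pi : ℂ) * Complex.I) ^ (k - 1) / (Nat.factorial (k - 2) : ℂ) *
            segInt (fun z => (τ - z) ^ (k - 2) * f z)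
              (((d : ℂ) * τ₀ - (b : ℂ)) / (-(c : ℂ) * τ₀ + (a : ℂ))) τ₀) ∧
    ∃ p : Polynomial ℂ, p.natDegree ≤ k - 2 ∧
      ∀ τ : ℂ, 0 < τ.im →
        slash (2 - (k : ℤ)) a b c d (eichler k f τ₀) τ - eichler k f τ₀ τ = p.eval τ := by
  have hγinv : ((d : ℂ) * τ₀ - b) / (-c * τ₀ + a) = moebius d (-b) (-c) a τ₀ := by
    simp only [moebius, ofReal_neg, sub_eq_add_neg, neg_mul]
  have hqmem : 0 < (moebius d (-b) (-c) a τ₀).im :=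
    moebius_mem_upperHalfPlaneSet (by linear_combination hdet) hτ₀
  have hformula := fun (τ : ℂ) (hτ : 0 < τ.im) => slash_eichler_sub_eichler hk hf hdet hinv hτ₀ hτ
  obtain ⟨p, hp, hpeval⟩ := exists_polynomial_segInt_sub_pow_mul (k - 2)
    (hf.continuousOn.mono ((convex_halfSpace_im_gt 0).segment_subset hqmem hτ₀))
  refine ⟨fun τ hτ => hγinv ▸ hformula τ hτ, Polynomial.C ((2 * (Real.pi : ℂ) * I) ^ (k - 1) /
    (Nat.factorial (k - 2) : ℂ)) * p, (Polynomial.natDegree_C_mul_le _ _).trans hp,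
    fun τ hτ => ?_⟩
  rw [hformula τ hτ, hpeval, Polynomial.eval_C_mul]
end
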